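/- For any vectors v, v', q, q' ∈ ℝ^k and any index c, |S_c(v')·S_c(q') / (S_c(v)·S_c(q)) - 1| ≤ e^{2(‖v'-v‖_∞ + ‖q'-q‖_∞)} - 1, where S is the softmax map. -/

import Mathlib

open scoped BigOperators
open Matrix

/-- The softmax map: `S_c(v) = exp(v_c) / ∑_{c'} exp(v_{c'})`. -/
noncomputable def softmax {k : ℕ} (v : Fin k → ℝ) (c : Fin k) : ℝ :=
  Real.exp (v c) / ∑ c', Real.exp (v c')

lemma softmax_pos {k : ℕ} (v : Fin k → ℝ) (c : Fin k) : 0 < softmax v c := by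
  unfold softmax
  exact div_pos (Real.exp_pos _)
    (Finset.sum_pos (fun i _ => Real.exp_pos _) ⟨c, Finset.mem_univ c⟩)

lemma softmax_ratio_bound {k : ℕ} (v v' : Fin k → ℝ) (c : Fin k) :
    Real.exp (-(2 * ⨆ i, |v' i - v i|)) ≤ softmax v' c / softmax v c ∧
    softmax v' c / softmax v c ≤ Real.exp (2 * ⨆ i, |v' i - v i|) := by
  set ε := ⨆ i, |v' i - v i| with hε
  have hb : ∀ i, |v' i - v i| ≤ ε := fun i =>
    le_ciSup (f := fun j => |v' j - v j|) (Set.Finite.bddAbove (Set.finite_range _)) i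
  have hsum : ∀ (a b : Fin k → ℝ), (∀ i, a i - b i ≤ ε) →
      (∑ i, Real.exp (a i)) ≤ Real.exp ε * ∑ i, Real.exp (b i) := by
    intro a b h
    rw [Finset.mul_sum]
    refine Finset.sum_le_sum fun i _ => ?_
    rw [← Real.exp_add]
    exact Real.exp_le_exp.mpr (by linarith [h i])
  have h1 : (∑ i, Real.exp (v i)) ≤ Real.exp ε * ∑ i, Real.exp (v' i) :=
    hsum v v' fun i => by have := abs_le.mp (hb i); linarith [this.1]
  have h2 : (∑ i, Real.exp (v' i)) ≤ Real.exp ε * ∑ i, Real.exp (v i) :=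
    hsum v' v fun i => by have := abs_le.mp (hb i); linarith [this.2]
  have h3 : Real.exp (v' c) ≤ Real.exp ε * Real.exp (v c) := by
    rw [← Real.exp_add]
    exact Real.exp_le_exp.mpr (by have := abs_le.mp (hb c); linarith [this.2])
  have h4 : Real.exp (v c) ≤ Real.exp ε * Real.exp (v' c) := by
    rw [← Real.exp_add]
    exact Real.exp_le_exp.mpr (by have := abs_le.mp (hb c); linarith [this.1])
  have Svpos : (0:ℝ) < ∑ i, Real.exp (v i) :=
    Finset.sum_pos (fun i _ => Real.exp_pos _) ⟨c, Finset.mem_univ c⟩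
  have Sv'pos : (0:ℝ) < ∑ i, Real.exp (v' i) :=
    Finset.sum_pos (fun i _ => Real.exp_pos _) ⟨c, Finset.mem_univ c⟩
  have hepos := Real.exp_pos ε
  have hratio : softmax v' c / softmax v c =
      Real.exp (v' c) * (∑ i, Real.exp (v i)) /
        (Real.exp (v c) * ∑ i, Real.exp (v' i)) := by
    unfold softmax
    field_simp
  have hexp2 : Real.exp (2 * ε) = Real.exp ε * Real.exp ε := by
    rw [← Real.exp_add]; ring_nf
  constructor
  · rw [hratio, Real.exp_neg, hexp2, le_div_iff₀ (by positivity),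
      inv_mul_le_iff₀ (by positivity)]
    calc Real.exp (v c) * (∑ i, Real.exp (v' i))
        ≤ (Real.exp ε * Real.exp (v' c)) * (Real.exp ε * ∑ i, Real.exp (v i)) :=
          mul_le_mul h4 h2 Sv'pos.le (by positivity)
      _ = Real.exp ε * Real.exp ε * (Real.exp (v' c) * (∑ i, Real.exp (v i))) := by ring
  · rw [hratio, div_le_iff₀ (by positivity), hexp2]
    calc Real.exp (v' c) * (∑ i, Real.exp (v i))
        ≤ (Real.exp ε * Real.exp (v c)) * (Real.exp ε * ∑ i, Real.exp (v' i)) :=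
          mul_le_mul h3 h1 (le_of_lt Svpos) (by positivity)
      _ = Real.exp ε * Real.exp ε * (Real.exp (v c) * ∑ i, Real.exp (v' i)) := by ring

/-- Product softmax ratio bound:
`|S_c(v') S_c(q') / (S_c(v) S_c(q)) - 1| ≤ e^{2(‖v'-v‖_∞ + ‖q'-q‖_∞)} - 1`. -/
theorem softmax_product_ratio_bound {k : ℕ} (v v' q q' : Fin k → ℝ) (c : Fin k) :
    |softmax v' c * softmax q' c / (softmax v c * softmax q c) - 1| ≤
      Real.exp (2 * ((⨆ i, |v' i - v i|) + ⨆ i, |q' i - q i|)) - 1 := by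
  obtain ⟨hv1, hv2⟩ := softmax_ratio_bound v v' c
  obtain ⟨hq1, hq2⟩ := softmax_ratio_bound q q' c
  have hvpos := softmax_pos v c
  have hqpos := softmax_pos q c
  have hv'pos := softmax_pos v' c
  have hq'pos := softmax_pos q' c
  set ε := ⨆ i, |v' i - v i|
  set δ := ⨆ i, |q' i - q i|
  have hR : softmax v' c * softmax q' c / (softmax v c * softmax q c) =
      (softmax v' c / softmax v c) * (softmax q' c / softmax q c) := by
    field_simp
  rw [hR]
  have hr1pos : 0 < softmax v' c / softmax v c := div_pos hv'pos hvpos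
  have hr2pos : 0 < softmax q' c / softmax q c := div_pos hq'pos hqpos
  have hupper : (softmax v' c / softmax v c) * (softmax q' c / softmax q c) ≤
      Real.exp (2 * (ε + δ)) := by
    have he : Real.exp (2 * (ε + δ)) = Real.exp (2 * ε) * Real.exp (2 * δ) := by
      rw [← Real.exp_add]; ring_nf
    rw [he]
    exact mul_le_mul hv2 hq2 hr2pos.le (Real.exp_pos _).le
  have hlower : Real.exp (-(2 * (ε + δ))) ≤
      (softmax v' c / softmax v c) * (softmax q' c / softmax q c) := by
    have he : Real.exp (-(2 * (ε + δ))) = Real.exp (-(2 * ε)) * Real.exp (-(2 * δ)) := by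
      rw [← Real.exp_add]; ring_nf
    rw [he]
    exact mul_le_mul hv1 hq1 (Real.exp_pos _).le hr1pos.le
  have hinv : Real.exp (-(2 * (ε + δ))) = (Real.exp (2 * (ε + δ)))⁻¹ := Real.exp_neg _
  have ht : (0:ℝ) < Real.exp (2 * (ε + δ)) := Real.exp_pos _
  rw [abs_le]
  constructor
  · rw [hinv] at hlower
    have h0 : (Real.exp (2 * (ε + δ)))⁻¹ * Real.exp (2 * (ε + δ)) = 1 :=
      inv_mul_cancel₀ ht.ne'
    nlinarith [sq_nonneg (Real.exp (2 * (ε + δ)) - 1)]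
  · linarith
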